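/- arXiv:1606.05639 — 3 statements merged into one kernel-verified Lean document; each statement's English description precedes it below -/
import Mathlib

section
/- Let 0 ≤ t ≤ f ≤ n and 0 ≤ t ≤ f' ≤ n, let F be a flag of size f with t labeled vertices and F' a flag of size f' with t labeled vertices, and suppose their intersection types differ, i.e., there exist 1 ≤ i < j ≤ t such that {i,j} is an edge of exactly one of F and F'. Then for every injective map Θ: {1,…,t} → {1,…,n}, the polynomial d_F^Θ · d_{F'}^Θ lies in the ideal I_n; equivalently, it vanishes at every point x ∈ {0,1}^{C(n,2)}. -/
open MvPolynomial Finset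
open scoped Classical

noncomputable section

abbrev PolyRing (n : ℕ) := MvPolynomial (Sym2 (Fin n)) ℝ

def xe {n : ℕ} (i j : Fin n) : PolyRing n := X s(i, j)

def hcIdeal (n : ℕ) : Ideal (PolyRing n) :=
  Ideal.span {q | ∃ i j : Fin n, i ≠ j ∧ q = xe i j ^ 2 - xe i j}

def injOn (t f n : ℕ) (htf : t ≤ f) (Θ : Fin t → Fin n) : Finset (Fin f → Fin n) :=
  Finset.univ.filter fun h => Function.Injective h ∧ ∀ i : Fin t, h (Fin.castLE htf i) = Θ i

def edgePairs {f : ℕ} (F : SimpleGraph (Fin f)) : Finset (Fin f × Fin f) :=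
  Finset.univ.filter fun p => p.1 < p.2 ∧ F.Adj p.1 p.2

def nonEdgePairs {f : ℕ} (F : SimpleGraph (Fin f)) : Finset (Fin f × Fin f) :=
  Finset.univ.filter fun p => p.1 < p.2 ∧ ¬ F.Adj p.1 p.2

def dF {t f n : ℕ} (htf : t ≤ f) (F : SimpleGraph (Fin f)) (Θ : Fin t → Fin n) : PolyRing n :=
  ∑ h ∈ injOn t f n htf Θ,
    (∏ p ∈ edgePairs F, xe (h p.1) (h p.2)) *
    (∏ p ∈ nonEdgePairs F, (1 - xe (h p.1) (h p.2)))

lemma factor_edge {t f n : ℕ} (htf : t ≤ f) (F : SimpleGraph (Fin f)) (Θ : Fin t → Fin n)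
    {i j : Fin t} (hij : i < j) (hadj : F.Adj (Fin.castLE htf i) (Fin.castLE htf j)) :
    ∃ C, dF htf F Θ = xe (Θ i) (Θ j) * C := by
  refine ⟨∑ h ∈ injOn t f n htf Θ,
    (∏ p ∈ (edgePairs F).erase (Fin.castLE htf i, Fin.castLE htf j), xe (h p.1) (h p.2)) *
    (∏ p ∈ nonEdgePairs F, (1 - xe (h p.1) (h p.2))), ?_⟩
  rw [dF, Finset.mul_sum]
  refine Finset.sum_congr rfl fun h hh => ?_
  simp only [injOn, Finset.mem_filter] at hh
  have h1 : h (Fin.castLE htf i) = Θ i := hh.2.2 i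
  have h2 : h (Fin.castLE htf j) = Θ j := hh.2.2 j
  have hmem : (Fin.castLE htf i, Fin.castLE htf j) ∈ edgePairs F := by
    simp only [edgePairs, Finset.mem_filter, Finset.mem_univ, true_and]
    exact ⟨by exact hij, hadj⟩
  rw [← Finset.mul_prod_erase _ _ hmem, h1, h2]
  ring

lemma factor_nonedge {t f n : ℕ} (htf : t ≤ f) (F : SimpleGraph (Fin f)) (Θ : Fin t → Fin n)
    {i j : Fin t} (hij : i < j) (hadj : ¬ F.Adj (Fin.castLE htf i) (Fin.castLE htf j)) :
    ∃ C, dF htf F Θ = (1 - xe (Θ i) (Θ j)) * C := by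
  refine ⟨∑ h ∈ injOn t f n htf Θ,
    (∏ p ∈ edgePairs F, xe (h p.1) (h p.2)) *
    (∏ p ∈ (nonEdgePairs F).erase (Fin.castLE htf i, Fin.castLE htf j),
      (1 - xe (h p.1) (h p.2))), ?_⟩
  rw [dF, Finset.mul_sum]
  refine Finset.sum_congr rfl fun h hh => ?_
  simp only [injOn, Finset.mem_filter] at hh
  have h1 : h (Fin.castLE htf i) = Θ i := hh.2.2 i
  have h2 : h (Fin.castLE htf j) = Θ j := hh.2.2 j
  have hmem : (Fin.castLE htf i, Fin.castLE htf j) ∈ nonEdgePairs F := by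
    simp only [nonEdgePairs, Finset.mem_filter, Finset.mem_univ, true_and]
    exact ⟨by exact hij, hadj⟩
  rw [← Finset.mul_prod_erase _ _ hmem, h1, h2]
  ring

lemma key_lemma {n : ℕ} (a b : Fin n) (hab : a ≠ b) (C P : PolyRing n)
    (hP : P = xe a b * (1 - xe a b) * C) :
    P ∈ hcIdeal n ∧ ∀ x : Sym2 (Fin n) → ℝ, (∀ e, x e = 0 ∨ x e = 1) → eval x P = 0 := by
  constructor
  · have hgen : xe a b ^ 2 - xe a b ∈ hcIdeal n :=
      Ideal.subset_span ⟨a, b, hab, rfl⟩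
    have hP' : P = (xe a b ^ 2 - xe a b) * (-C) := by rw [hP]; ring
    rw [hP']
    exact Ideal.mul_mem_right _ _ hgen
  · intro x hx
    rw [hP]
    simp only [map_mul, map_sub, map_one, xe, eval_X]
    rcases hx s(a, b) with h | h <;> rw [h] <;> ring

theorem stmt2 (n t f f' : ℕ) (htf : t ≤ f) (hfn : f ≤ n) (htf' : t ≤ f') (hf'n : f' ≤ n)
    (F : SimpleGraph (Fin f)) (F' : SimpleGraph (Fin f'))
    -- the intersection types of `F` and `F'` differ
    (hdiff : ∃ i j : Fin t, i < j ∧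
      ¬ (F.Adj (Fin.castLE htf i) (Fin.castLE htf j) ↔
         F'.Adj (Fin.castLE htf' i) (Fin.castLE htf' j)))
    (Θ : Fin t → Fin n) (hΘ : Function.Injective Θ) :
    dF htf F Θ * dF htf' F' Θ ∈ hcIdeal n ∧
    ∀ x : Sym2 (Fin n) → ℝ, (∀ e, x e = 0 ∨ x e = 1) →
      eval x (dF htf F Θ * dF htf' F' Θ) = 0 := by
  obtain ⟨i, j, hij, hne⟩ := hdiff
  have hΘij : Θ i ≠ Θ j := fun h => hij.ne (hΘ h)
  by_cases hF : F.Adj (Fin.castLE htf i) (Fin.castLE htf j)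
  · have hF' : ¬ F'.Adj (Fin.castLE htf' i) (Fin.castLE htf' j) := fun h => hne ⟨fun _ => h, fun _ => hF⟩
    obtain ⟨C, hC⟩ := factor_edge htf F Θ hij hF
    obtain ⟨C', hC'⟩ := factor_nonedge htf' F' Θ hij hF'
    exact key_lemma (Θ i) (Θ j) hΘij (C * C') _ (by rw [hC, hC']; ring)
  · have hF' : F'.Adj (Fin.castLE htf' i) (Fin.castLE htf' j) := by
      by_contra h; exact hne ⟨fun h' => absurd h' hF, fun h' => absurd h' h⟩
    obtain ⟨C, hC⟩ := factor_nonedge htf F Θ hij hF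
    obtain ⟨C', hC'⟩ := factor_edge htf' F' Θ hij hF'
    exact key_lemma (Θ i) (Θ j) hΘij (C * C') _ (by rw [hC, hC']; ring)

end
end

section
/- Let 0 ≤ t ≤ f ≤ n, let F and F' be flags of size f with t labeled vertices, and fix an injective map Θ₀: {1,…,t} → {1,…,n}. Then the full symmetrization of the product d_F^{Θ₀}·d_{F'}^{Θ₀} equals the average of d_F^Θ·d_{F'}^Θ over all injective labelings: (1/n!) Σ_{σ ∈ S_n} σ·( d_F^{Θ₀} · d_{F'}^{Θ₀} ) = ((n−t)!/n!) Σ_{Θ ∈ Inj([t],[n])} d_F^Θ · d_{F'}^Θ, where Inj([t],[n]) is the set of injective maps {1,…,t} → {1,…,n}. -/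
open MvPolynomial Finset
open scoped Classical

noncomputable section

def permAct {n : ℕ} (σ : Equiv.Perm (Fin n)) : PolyRing n →ₐ[ℝ] PolyRing n :=
  MvPolynomial.rename (Sym2.map σ)

/-
Relabelling commutes with d: σ·d_F^Θ = d_F^{σ∘Θ}, so the symmetrization is a sum of
d_F^Θ d_{F'}^Θ over Θ = σ∘Θ₀. Every injective Θ arises, and the permutations sending Θ₀ to Θ
form a coset of the pointwise stabilizer of the image of Θ₀, i.e. of the symmetric group on the
remaining n − t points; so each injective Θ is counted exactly (n − t)! times.
-/

lemma permAct_xe {n : ℕ} (σ : Equiv.Perm (Fin n)) (i j : Fin n) :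
    permAct σ (xe i j) = xe (σ i) (σ j) := by
  simp [permAct, xe]

lemma comp_mem_injOn_iff {t f n : ℕ} (htf : t ≤ f) (σ : Equiv.Perm (Fin n))
    (Θ : Fin t → Fin n) (h : Fin f → Fin n) :
    σ ∘ h ∈ injOn t f n htf (σ ∘ Θ) ↔ h ∈ injOn t f n htf Θ := by
  simp [injOn, σ.injective.of_comp_iff]

lemma permAct_dF {t f n : ℕ} (htf : t ≤ f) (F : SimpleGraph (Fin f))
    (σ : Equiv.Perm (Fin n)) (Θ : Fin t → Fin n) :
    permAct σ (dF htf F Θ) = dF htf F (σ ∘ Θ) := by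
  rw [dF, dF, map_sum]
  refine Finset.sum_equiv (Equiv.piCongrRight fun _ => σ) (fun h => ?_) (fun h _ => ?_)
  · exact (comp_mem_injOn_iff htf σ Θ h).symm
  · simp [permAct_xe]

section PermComp

open Function Equiv Nat

variable {ι α : Type*} [Fintype ι] [Fintype α] [DecidableEq α]

lemma card_filter_perm_comp_eq_self {θ₀ : ι → α} (h₀ : Injective θ₀) :
    #{σ : Perm α | ⇑σ ∘ θ₀ = θ₀} = (Fintype.card α - Fintype.card ι)! := by
  have hfix : #{σ : Perm α | ⇑σ ∘ θ₀ = θ₀}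
      = Fintype.card {σ : Perm α // ∀ a, ¬a ∉ Set.range θ₀ → σ a = a} := by
    rw [Fintype.card_subtype]
    congr 1
    ext σ
    simp [_root_.funext_iff]
  have hcompl : Fintype.card {a // a ∉ Set.range θ₀} = Fintype.card α - Fintype.card ι := by
    rw [Fintype.card_subtype_compl, ← Set.card_range_of_injective h₀]
  rw [hfix, ← Fintype.card_congr (Perm.subtypeEquivSubtypePerm _), Fintype.card_perm, hcompl]

lemma card_filter_perm_comp_eq {θ₀ θ : ι → α} (h₀ : Injective θ₀) (h : Injective θ) :
    #{σ : Perm α | ⇑σ ∘ θ₀ = θ} = (Fintype.card α - Fintype.card ι)! := by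
  obtain ⟨τ, hτ⟩ := Perm.exists_extending_pair θ₀ θ h₀ h
  rw [← card_filter_perm_comp_eq_self h₀]
  refine Finset.card_equiv (Equiv.mulLeft τ⁻¹) fun σ => ?_
  simp [_root_.funext_iff, ← hτ, Equiv.symm_apply_eq]

lemma sum_perm_comp_eq_smul_sum_injective [DecidableEq ι] {M : Type*} [AddCommMonoid M]
    {θ₀ : ι → α} (h₀ : Injective θ₀) (g : (ι → α) → M) :
    ∑ σ : Perm α, g (⇑σ ∘ θ₀) =
      (Fintype.card α - Fintype.card ι)! • ∑ θ ∈ univ.filter (fun θ : ι → α => Injective θ), g θ := by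
  rw [← Finset.sum_fiberwise_of_maps_to (g := fun σ : Perm α => ⇑σ ∘ θ₀)
    (t := univ.filter fun θ : ι → α => Injective θ)
    (fun σ _ => by simpa using σ.injective.comp h₀), Finset.smul_sum]
  refine Finset.sum_congr rfl fun θ hθ => ?_
  rw [Finset.sum_congr rfl fun σ hσ => congrArg g (mem_filter.1 hσ).2, sum_const,
    card_filter_perm_comp_eq h₀ (mem_filter.1 hθ).2]

end PermComp

theorem stmt3_general (n t f : ℕ) (htf : t ≤ f)
    (F F' : SimpleGraph (Fin f))
    (Θ₀ : Fin t → Fin n) (hΘ₀ : Function.Injective Θ₀) :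
    ((n.factorial : ℝ))⁻¹ •
        ∑ σ : Equiv.Perm (Fin n), permAct σ (dF htf F Θ₀ * dF htf F' Θ₀) =
      (((n - t).factorial : ℝ) / (n.factorial : ℝ)) •
        ∑ Θ ∈ Finset.univ.filter (fun Θ : Fin t → Fin n => Function.Injective Θ),
          dF htf F Θ * dF htf F' Θ := by
  simp only [map_mul, permAct_dF]
  rw [sum_perm_comp_eq_smul_sum_injective hΘ₀ fun Θ => dF htf F Θ * dF htf F' Θ,
    Fintype.card_fin, Fintype.card_fin, ← Nat.cast_smul_eq_nsmul ℝ, smul_smul, div_eq_inv_mul]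

theorem stmt3 (n t f : ℕ) (htf : t ≤ f) (hfn : f ≤ n)
    (F F' : SimpleGraph (Fin f))
    (Θ₀ : Fin t → Fin n) (hΘ₀ : Function.Injective Θ₀) :
    ((n.factorial : ℝ))⁻¹ •
        ∑ σ : Equiv.Perm (Fin n), permAct σ (dF htf F Θ₀ * dF htf F' Θ₀) =
      (((n - t).factorial : ℝ) / (n.factorial : ℝ)) •
        ∑ Θ ∈ Finset.univ.filter (fun Θ : Fin t → Fin n => Function.Injective Θ),
          dF htf F Θ * dF htf F' Θ :=
  stmt3_general n t f htf F F' Θ₀ hΘ₀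

end
end

section
/- Let n ≥ 3. In the polynomial ring ℝ[x_{ij} : 1 ≤ i < j ≤ n] (with x_{ji} = x_{ij}), let I be the ideal generated by x_{ij}² − x_{ij} for all 1 ≤ i < j ≤ n together with x_{ij}·x_{ik}·x_{lj}·x_{lk} for all pairwise distinct i, j, k, l ∈ {1,…,n}. Set s := Σ_{1 ≤ i < j ≤ n} x_{ij}. Then the polynomial n + (2/(n−1))·s − (2/C(n,2))·s² is 2-sos modulo I: there exist finitely many polynomials f_1,…,f_k of degree at most 2 such that n + (2/(n−1))·s − (2/C(n,2))·s² − (f_1² + ⋯ + f_k²) ∈ I. -/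
open MvPolynomial Finset
open scoped Classical

noncomputable section

/-- The ideal generated by `x_{ij}² − x_{ij}` together with the 4-cycle monomials
`x_{ij}·x_{ik}·x_{lj}·x_{lk}` for pairwise distinct `i,j,k,l`. -/
def c4Ideal (n : ℕ) : Ideal (PolyRing n) :=
  Ideal.span
    ({q | ∃ i j : Fin n, i ≠ j ∧ q = xe i j ^ 2 - xe i j} ∪
     {q | ∃ i j k l : Fin n,
        i ≠ j ∧ i ≠ k ∧ i ≠ l ∧ j ≠ k ∧ j ≠ l ∧ k ≠ l ∧
        q = xe i j * xe i k * xe l j * xe l k})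

/-- `s = Σ_{1 ≤ i < j ≤ n} x_{ij}`. -/
def sEdges (n : ℕ) : PolyRing n :=
  ∑ p ∈ Finset.univ.filter (fun p : Fin n × Fin n => p.1 < p.2), xe p.1 p.2

namespace C4sos

variable {n : ℕ}

def dv (n : ℕ) (v : Fin n) : PolyRing n := ∑ u ∈ univ.erase v, xe v u

def Pp (n : ℕ) (u w : Fin n) : PolyRing n :=
  ∑ v ∈ univ \ ({u, w} : Finset (Fin n)), xe v u * xe v w

def E1p (n : ℕ) : PolyRing n := ∑ v, ∑ u ∈ univ.erase v, (xe v u ^ 2 - xe v u)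

def E2p (n : ℕ) : PolyRing n :=
  ∑ p ∈ (univ : Finset (Fin n)).offDiag, ((Pp n p.1 p.2) ^ 2 - Pp n p.1 p.2)

def Qp (n : ℕ) : PolyRing n := ∑ p ∈ (univ : Finset (Fin n)).offDiag, Pp n p.1 p.2

lemma xe_symm (i j : Fin n) : xe i j = xe j i := by
  unfold xe; rw [Sym2.eq_swap]

lemma gen_mem {i j : Fin n} (h : i ≠ j) : xe i j ^ 2 - xe i j ∈ c4Ideal n :=
  Ideal.subset_span (Or.inl ⟨i, j, h, rfl⟩)

lemma cyc_mem {i j k l : Fin n} (hij : i ≠ j) (hik : i ≠ k) (hil : i ≠ l)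
    (hjk : j ≠ k) (hjl : j ≠ l) (hkl : k ≠ l) :
    xe i j * xe i k * xe l j * xe l k ∈ c4Ideal n :=
  Ideal.subset_span (Or.inr ⟨i, j, k, l, hij, hik, hil, hjk, hjl, hkl, rfl⟩)

lemma quad_mem {i j k l : Fin n} (h1 : i ≠ j) (h2 : k ≠ l) :
    (xe i j * xe k l) ^ 2 - xe i j * xe k l ∈ c4Ideal n := by
  have h : (xe i j * xe k l) ^ 2 - xe i j * xe k l
      = (xe i j ^ 2 - xe i j) * xe k l ^ 2 + (xe k l ^ 2 - xe k l) * xe i j := by ring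
  rw [h]
  exact add_mem (Ideal.mul_mem_right _ _ (gen_mem h1)) (Ideal.mul_mem_right _ _ (gen_mem h2))

lemma sq_sum {α : Type*} [DecidableEq α] (s : Finset α) (f : α → PolyRing n) :
    (∑ x ∈ s, f x) ^ 2 = ∑ x ∈ s, f x ^ 2 + ∑ p ∈ s.offDiag, f p.1 * f p.2 := by
  rw [sq, Finset.sum_mul_sum, ← Finset.sum_product', ← Finset.diag_union_offDiag s,
    Finset.sum_union (Finset.disjoint_diag_offDiag s), Finset.sum_diag]
  simp [sq]

lemma E1_mem : E1p n ∈ c4Ideal n := by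
  refine Ideal.sum_mem _ fun v _ => Ideal.sum_mem _ fun u hu => ?_
  exact gen_mem (Finset.ne_of_mem_erase hu).symm

lemma P2_mem {u w : Fin n} (huw : u ≠ w) :
    (Pp n u w) ^ 2 - Pp n u w ∈ c4Ideal n := by
  classical
  rw [show (Pp n u w) ^ 2 - Pp n u w
      = (∑ v ∈ univ \ ({u, w} : Finset (Fin n)), ((xe v u * xe v w) ^ 2 - xe v u * xe v w))
        + ∑ p ∈ (univ \ ({u, w} : Finset (Fin n))).offDiag,
            (xe p.1 u * xe p.1 w) * (xe p.2 u * xe p.2 w) by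
    unfold Pp; rw [sq_sum, Finset.sum_sub_distrib]; simp only [mul_pow]; abel]
  refine add_mem (Ideal.sum_mem _ fun v hv => ?_) (Ideal.sum_mem _ fun p hp => ?_)
  · simp only [Finset.mem_sdiff, Finset.mem_insert, Finset.mem_singleton, not_or] at hv
    exact quad_mem hv.2.1 hv.2.2
  · rcases Finset.mem_offDiag.mp hp with ⟨h1, h2, h12⟩
    simp only [Finset.mem_sdiff, Finset.mem_insert, Finset.mem_singleton, not_or] at h1 h2
    have h := cyc_mem (i := p.1) (j := u) (k := w) (l := p.2)
      h1.2.1 h1.2.2 h12 huw (fun he => h2.2.1 he.symm) (fun he => h2.2.2 he.symm)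
    rw [show (xe p.1 u * xe p.1 w) * (xe p.2 u * xe p.2 w)
        = xe p.1 u * xe p.1 w * xe p.2 u * xe p.2 w by ring]
    exact h

lemma E2_mem : E2p n ∈ c4Ideal n :=
  Ideal.sum_mem _ fun p hp => P2_mem (Finset.mem_offDiag.mp hp).2.2

lemma sum_erase_eq_off (f : Fin n → Fin n → PolyRing n) :
    ∑ v, ∑ u ∈ univ.erase v, f v u = ∑ p ∈ (univ : Finset (Fin n)).offDiag, f p.1 p.2 := by
  classical
  rw [Finset.sum_sigma']
  refine Finset.sum_nbij' (fun x => (x.1, x.2)) (fun p => (⟨p.1, p.2⟩ : Σ _ : Fin n, Fin n))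
    ?_ ?_ ?_ ?_ ?_ <;>
    simp +contextual [Finset.mem_sigma, Finset.mem_offDiag, Finset.mem_erase, ne_comm]

lemma off_eq : ∑ p ∈ (univ : Finset (Fin n)).offDiag, xe p.1 p.2 = 2 * sEdges n := by
  classical
  rw [← Finset.sum_filter_add_sum_filter_not ((univ : Finset (Fin n)).offDiag)
      (fun p => p.1 < p.2)]
  have e1 : ((univ : Finset (Fin n)).offDiag).filter (fun p => p.1 < p.2)
      = univ.filter (fun p : Fin n × Fin n => p.1 < p.2) := by
    ext p
    simp only [Finset.mem_filter, Finset.mem_offDiag, Finset.mem_univ, true_and]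
    exact ⟨fun h => h.2, fun h => ⟨ne_of_lt h, h⟩⟩
  have e2 : ∑ p ∈ ((univ : Finset (Fin n)).offDiag).filter (fun p => ¬ p.1 < p.2), xe p.1 p.2
      = ∑ p ∈ univ.filter (fun p : Fin n × Fin n => p.1 < p.2), xe p.1 p.2 := by
    refine Finset.sum_nbij' Prod.swap Prod.swap ?_ ?_ ?_ ?_ ?_
    · intro p hp
      simp only [Finset.mem_filter, Finset.mem_offDiag, Finset.mem_univ, true_and,
        not_lt] at hp
      simp only [Finset.mem_filter, Finset.mem_univ, true_and, Prod.fst_swap, Prod.snd_swap]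
      exact lt_of_le_of_ne hp.2 hp.1.symm
    · intro p hp
      simp only [Finset.mem_filter, Finset.mem_univ, true_and] at hp
      simp only [Finset.mem_filter, Finset.mem_offDiag, Finset.mem_univ, true_and,
        Prod.fst_swap, Prod.snd_swap, not_lt]
      exact ⟨ne_of_gt hp, le_of_lt hp⟩
    · intro p _; exact Prod.swap_swap p
    · intro p _; exact Prod.swap_swap p
    · intro p _; exact xe_symm p.1 p.2
  rw [e1, e2]
  rw [sEdges, two_mul]

lemma sum_dv : ∑ v, dv n v = 2 * sEdges n := by
  unfold dv
  rw [sum_erase_eq_off, off_eq]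

lemma swap3 : ∑ v, ∑ p ∈ ((univ : Finset (Fin n)).erase v).offDiag, xe v p.1 * xe v p.2
    = Qp n := by
  classical
  unfold Qp Pp
  rw [Finset.sum_sigma', Finset.sum_sigma']
  refine Finset.sum_nbij' (fun x => (⟨(x.2.1, x.2.2), x.1⟩ : Σ _ : Fin n × Fin n, Fin n))
    (fun y => (⟨y.2, (y.1.1, y.1.2)⟩ : Σ _ : Fin n, Fin n × Fin n)) ?_ ?_ ?_ ?_ ?_ <;>
    simp +contextual [Finset.mem_sigma, Finset.mem_offDiag, Finset.mem_erase,
      Finset.mem_sdiff, Finset.mem_insert, Finset.mem_singleton, ne_comm, not_or]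

lemma sum_dv_sq : ∑ v, (dv n v) ^ 2 = E1p n + 2 * sEdges n + Qp n := by
  have h : ∀ v : Fin n, (dv n v) ^ 2 = ∑ u ∈ univ.erase v, xe v u ^ 2
      + ∑ p ∈ ((univ : Finset (Fin n)).erase v).offDiag, xe v p.1 * xe v p.2 :=
    fun v => sq_sum _ _
  calc ∑ v, (dv n v) ^ 2
      = ∑ v, (∑ u ∈ univ.erase v, xe v u ^ 2)
        + ∑ v, ∑ p ∈ ((univ : Finset (Fin n)).erase v).offDiag, xe v p.1 * xe v p.2 := by
        rw [← Finset.sum_add_distrib]; exact Finset.sum_congr rfl fun v _ => h v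
    _ = E1p n + 2 * sEdges n + Qp n := by
        rw [swap3]
        congr 1
        have : ∑ v, (∑ u ∈ univ.erase v, (xe v u : PolyRing n) ^ 2)
            = E1p n + ∑ v, dv n v := by
          unfold E1p dv
          rw [← Finset.sum_add_distrib]
          refine Finset.sum_congr rfl fun v _ => ?_
          rw [← Finset.sum_add_distrib]
          exact Finset.sum_congr rfl fun u _ => by ring
        rw [this, sum_dv]

end C4sos

open C4sos

theorem stmt10 (n : ℕ) (hn : 3 ≤ n) :
    ∃ (k : ℕ) (g : Fin k → PolyRing n),
      (∀ i, (g i).totalDegree ≤ 2) ∧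
      (C (n : ℝ) + C (2 / ((n : ℝ) - 1)) * sEdges n
          - C (2 / (n.choose 2 : ℝ)) * (sEdges n) ^ 2
          - ∑ i, g i ^ 2) ∈ c4Ideal n := by

  have hn3 : (3:ℝ) ≤ (n:ℝ) := by exact_mod_cast hn
  have hn0 : (n:ℝ) ≠ 0 := by linarith
  have hn1 : (n:ℝ) - 1 ≠ 0 := by linarith
  set a : ℝ := ((n:ℝ) - 1)⁻¹ with ha
  have ha0 : 0 ≤ a := inv_nonneg.mpr (by linarith)
  set G : (Fin n × Fin n) ⊕ Fin n → PolyRing n :=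
    Sum.elim (fun p => if p.1 ≠ p.2 then C (Real.sqrt a) * (1 - Pp n p.1 p.2) else 0)
      (fun v => C (Real.sqrt a) * (dv n v - C (2/(n:ℝ)) * sEdges n)) with hG
  refine ⟨Fintype.card ((Fin n × Fin n) ⊕ Fin n),
    fun i => G ((Fintype.equivFin _).symm i), ?_, ?_⟩
  · intro i
    have hPdeg : ∀ u w : Fin n, (Pp n u w).totalDegree ≤ 2 := by
      intro u w
      refine totalDegree_finsetSum_le fun v _ => ?_
      refine (totalDegree_mul _ _).trans ?_
      simp [xe, totalDegree_X]
    have hsdeg : (sEdges n).totalDegree ≤ 1 :=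
      totalDegree_finsetSum_le fun p _ => by simp [xe, totalDegree_X]
    have hddeg : ∀ v, (dv n v).totalDegree ≤ 1 := fun v =>
      totalDegree_finsetSum_le fun u _ => by simp [xe, totalDegree_X]
    beta_reduce
    cases hsi : (Fintype.equivFin ((Fin n × Fin n) ⊕ Fin n)).symm i with
    | inl p =>
      simp only [hG, Sum.elim_inl]
      split
      · refine (totalDegree_mul _ _).trans ?_
        rw [totalDegree_C]
        have h2 : (1 - Pp n p.1 p.2).totalDegree ≤ 2 := by
          refine (totalDegree_sub _ _).trans ?_
          simp only [totalDegree_one]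
          exact max_le (by omega) (hPdeg p.1 p.2)
        omega
      · simp
    | inr v =>
      simp only [hG, Sum.elim_inr]
      refine (totalDegree_mul _ _).trans ?_
      rw [totalDegree_C]
      have h2 : (dv n v - C (2/(n:ℝ)) * sEdges n).totalDegree ≤ 1 := by
        refine (totalDegree_sub _ _).trans ?_
        refine max_le (hddeg v) ?_
        refine (totalDegree_mul _ _).trans ?_
        rw [totalDegree_C]
        omega
      omega
  · have hca : (C (Real.sqrt a) : PolyRing n) ^ 2 = C a := by
      rw [← map_pow, Real.sq_sqrt ha0]
    have hoff : (univ : Finset (Fin n × Fin n)).filter (fun p => ¬ p.1 = p.2)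
        = (univ : Finset (Fin n)).offDiag := by
      ext p; simp [Finset.mem_offDiag]
    have hgsum : ∑ i, (G ((Fintype.equivFin ((Fin n × Fin n) ⊕ Fin n)).symm i)) ^ 2
        = C a * (∑ p ∈ (univ : Finset (Fin n)).offDiag, (1 - Pp n p.1 p.2) ^ 2)
          + C a * (∑ v, (dv n v - C (2/(n:ℝ)) * sEdges n) ^ 2) := by
      rw [Equiv.sum_comp ((Fintype.equivFin ((Fin n × Fin n) ⊕ Fin n)).symm)
        (fun j => (G j) ^ 2), Fintype.sum_sum_type]
      congr 1
      · calc ∑ p : Fin n × Fin n, (G (Sum.inl p)) ^ 2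
            = ∑ p ∈ (univ : Finset (Fin n × Fin n)).filter (fun p => ¬ p.1 = p.2),
              (C (Real.sqrt a) * (1 - Pp n p.1 p.2)) ^ 2 := by
              rw [Finset.sum_filter]
              refine Finset.sum_congr rfl fun p _ => ?_
              simp only [hG, Sum.elim_inl, ne_eq]
              by_cases hc : p.1 = p.2 <;> simp [hc]
          _ = C a * ∑ p ∈ (univ : Finset (Fin n)).offDiag, (1 - Pp n p.1 p.2) ^ 2 := by
              rw [hoff, Finset.mul_sum]
              exact Finset.sum_congr rfl fun p _ => by rw [mul_pow, hca]
      · rw [Finset.mul_sum]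
        refine Finset.sum_congr rfl fun v _ => ?_
        simp only [hG, Sum.elim_inr]
        rw [mul_pow, hca]
    have hSP2 : ∑ p ∈ (univ : Finset (Fin n)).offDiag, (Pp n p.1 p.2) ^ 2
        = E2p n + Qp n := by
      unfold E2p Qp; rw [Finset.sum_sub_distrib]; ring
    have hcount : (∑ _p ∈ (univ : Finset (Fin n)).offDiag, (1 : PolyRing n))
        = C ((n*n - n : ℕ) : ℝ) := by
      rw [Finset.sum_const, Finset.offDiag_card, Finset.card_univ, Fintype.card_fin,
        nsmul_eq_mul, mul_one, C_eq_coe_nat]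
    have h1 : ∑ p ∈ (univ : Finset (Fin n)).offDiag, (1 - Pp n p.1 p.2) ^ 2
        = C ((n*n - n : ℕ) : ℝ) - 2 * Qp n + (E2p n + Qp n) := by
      have hper : ∀ p ∈ (univ : Finset (Fin n)).offDiag,
          (1 - Pp n p.1 p.2) ^ 2 = 1 - 2 * Pp n p.1 p.2 + (Pp n p.1 p.2) ^ 2 :=
        fun p _ => by ring
      rw [Finset.sum_congr rfl hper, Finset.sum_add_distrib, Finset.sum_sub_distrib,
        ← Finset.mul_sum, hcount, hSP2]
      rfl
    have hconst : ((n : ℕ) • ((C (2/(n:ℝ)) : PolyRing n) * sEdges n) ^ 2)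
        - 2 * (C (2/(n:ℝ)) * sEdges n) * (2 * sEdges n)
        = -(C (4/(n:ℝ)) * sEdges n ^ 2) := by
      rw [nsmul_eq_mul, ← C_eq_coe_nat]
      have c1 : (C ((n:ℕ) : ℝ) : PolyRing n) * C (2/(n:ℝ)) ^ 2 = C (4/(n:ℝ)) := by
        rw [← map_pow, ← C_mul]; congr 1; field_simp; ring
      have c2 : (4 : PolyRing n) * C (2/(n:ℝ)) = 2 * C (4/(n:ℝ)) := by
        rw [show (4 : PolyRing n) = C (4:ℝ) from (map_ofNat C 4).symm,
          show (2 : PolyRing n) = C (2:ℝ) from (map_ofNat C 2).symm, ← C_mul, ← C_mul]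
        congr 1; ring
      linear_combination (sEdges n) ^ 2 * c1 - (sEdges n) ^ 2 * c2
    have h2 : ∑ v, (dv n v - C (2/(n:ℝ)) * sEdges n) ^ 2
        = (E1p n + 2 * sEdges n + Qp n) - C (4/(n:ℝ)) * sEdges n ^ 2 := by
      have hper : ∀ v ∈ (univ : Finset (Fin n)),
          (dv n v - C (2/(n:ℝ)) * sEdges n) ^ 2
          = ((dv n v) ^ 2 - 2 * (C (2/(n:ℝ)) * sEdges n) * dv n v
              + (C (2/(n:ℝ)) * sEdges n) ^ 2) := fun v _ => by ring
      rw [Finset.sum_congr rfl hper, Finset.sum_add_distrib, Finset.sum_sub_distrib,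
        Finset.sum_const, Finset.card_univ, Fintype.card_fin, ← Finset.mul_sum,
        sum_dv, sum_dv_sq]
      linear_combination hconst
    have hA : (C a : PolyRing n) * C ((n*n - n : ℕ) : ℝ) = C ((n:ℝ)) := by
      have hle : n ≤ n * n := Nat.le_mul_of_pos_left n (by omega)
      have hcast : ((n*n - n : ℕ) : ℝ) = (n:ℝ) * (n:ℝ) - (n:ℝ) := by
        push_cast [Nat.cast_sub hle]; ring
      have hr : a * ((n*n - n : ℕ) : ℝ) = (n:ℝ) := by
        rw [hcast, ha]; field_simp
      rw [← hr, C_mul]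
    have hB : (C (2/((n:ℝ) - 1)) : PolyRing n) = 2 * C a := by
      have hr : (2:ℝ)/((n:ℝ) - 1) = 2 * a := by rw [ha, div_eq_mul_inv]
      rw [hr, C_mul, map_ofNat]
    have hC : (C (2/(n.choose 2 : ℝ)) : PolyRing n) = C a * C (4/(n:ℝ)) := by
      have hr : (2:ℝ)/(n.choose 2 : ℝ) = a * (4/(n:ℝ)) := by
        rw [Nat.cast_choose_two, ha]
        field_simp; ring
      rw [hr, C_mul]
    have key : (C (n : ℝ) + C (2 / ((n : ℝ) - 1)) * sEdges n
          - C (2 / (n.choose 2 : ℝ)) * (sEdges n) ^ 2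
          - ∑ i, (G ((Fintype.equivFin ((Fin n × Fin n) ⊕ Fin n)).symm i)) ^ 2)
        = -(C a) * (E1p n + E2p n) := by
      rw [hgsum, h1, h2, hB, hC]
      linear_combination -hA
    rw [key]
    exact Ideal.mul_mem_left _ _ (add_mem E1_mem E2_mem)

end
end
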